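/- arXiv:2205.12154 — 6 statements merged into one kernel-verified Lean document; each statement's English description precedes it below -/
import Mathlib

section
/- Let a < b, L = b − a, and let real constants ω, κ, ν, q be given. Suppose B : ℝ × [0,∞) → ℂ and ρ, u, φ : ℝ × [0,∞) → ℝ are smooth functions, L-periodic in x, with B satisfying B_t = i(ω B_xx − κ(u − ½ν ρ + q φ) B). Then the mass M(t) = ∫_a^b |B(x,t)|² dx is constant in t, i.e. M(t) = M(0) for all t ≥ 0. -/
open Complex intervalIntegral

private lemma hasDerivAt_normSq_comp {f : ℝ → ℂ} {f' : ℂ} {t : ℝ}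
    (hf : HasDerivAt f f' t) :
    HasDerivAt (fun s => Complex.normSq (f s))
      (2 * ((f t).re * f'.re + (f t).im * f'.im)) t := by
  have hre : HasDerivAt (fun s => (f s).re) f'.re t := by
    exact (Complex.reCLM.hasFDerivAt.comp_hasDerivAt t hf)
  have him : HasDerivAt (fun s => (f s).im) f'.im t := by
    exact (Complex.imCLM.hasFDerivAt.comp_hasDerivAt t hf)
  have h := (hre.mul hre).add (him.mul him)
  convert h using 1
  · rfl
  · rfl
  · funext s; simp [Complex.normSq_apply]
  · ring

private lemma periodic_deriv' {f : ℝ → ℂ} {L : ℝ} (h : Function.Periodic f L) :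
    Function.Periodic (deriv f) L := by
  intro x
  have : deriv (fun y => f (y + L)) x = deriv f (x + L) := deriv_comp_add_const _ _ _
  rw [← this]
  congr 1
  funext y
  exact h y

/-- For the reformulated Zakharov–Rubenchik magnetic-field equation
`B_t = i(ω B_xx − κ(u − ½ν ρ + q φ) B)` with `L`-periodic smooth data on `[a,b]`,
the mass `M(t) = ∫_a^b |B(x,t)|² dx` is constant in time. -/
theorem ZR_mass_conservation
    (a b : ℝ) (hab : a < b) (L : ℝ) (hL : L = b - a)
    (ω κ ν q : ℝ)
    (B : ℝ → ℝ → ℂ) (ρ u φ : ℝ → ℝ → ℝ)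
    (hBsmooth : ContDiff ℝ (⊤ : ℕ∞) (fun p : ℝ × ℝ => B p.1 p.2))
    (hρsmooth : ContDiff ℝ (⊤ : ℕ∞) (fun p : ℝ × ℝ => ρ p.1 p.2))
    (husmooth : ContDiff ℝ (⊤ : ℕ∞) (fun p : ℝ × ℝ => u p.1 p.2))
    (hφsmooth : ContDiff ℝ (⊤ : ℕ∞) (fun p : ℝ × ℝ => φ p.1 p.2))
    (hBper : ∀ t, Function.Periodic (fun x => B x t) L)
    (hρper : ∀ t, Function.Periodic (fun x => ρ x t) L)
    (huper : ∀ t, Function.Periodic (fun x => u x t) L)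
    (hφper : ∀ t, Function.Periodic (fun x => φ x t) L)
    (hBeq : ∀ (x t : ℝ), 0 ≤ t → deriv (fun s => B x s) t =
      Complex.I * ((ω : ℂ) * deriv (fun y => deriv (fun z => B z t) y) x
        - (κ : ℂ) * ((u x t - ν / 2 * ρ x t + q * φ x t : ℝ) : ℂ) * B x t)) :
    ∀ t : ℝ, 0 ≤ t →
      (∫ x in a..b, Complex.normSq (B x t)) = ∫ x in a..b, Complex.normSq (B x 0) := by
  -- joint function and partial derivatives
  set F : ℝ × ℝ → ℂ := fun p => B p.1 p.2 with hFdef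
  have hFdiff : Differentiable ℝ F := hBsmooth.differentiable (by simp)
  set Bx : ℝ → ℝ → ℂ := fun x t => fderiv ℝ F (x, t) (1, 0) with hBxdef
  set Bt : ℝ → ℝ → ℂ := fun x t => fderiv ℝ F (x, t) (0, 1) with hBtdef
  have hx : ∀ x t : ℝ, HasDerivAt (fun z => B z t) (Bx x t) x := by
    intro x t
    have h1 : HasDerivAt (fun z : ℝ => (z, t)) ((1 : ℝ), (0 : ℝ)) x :=
      (hasDerivAt_id x).prodMk (hasDerivAt_const x t)
    exact (hFdiff (x, t)).hasFDerivAt.comp_hasDerivAt x h1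
  have ht : ∀ x t : ℝ, HasDerivAt (fun s => B x s) (Bt x t) t := by
    intro x t
    have h1 : HasDerivAt (fun s : ℝ => (x, s)) ((0 : ℝ), (1 : ℝ)) t :=
      (hasDerivAt_const t x).prodMk (hasDerivAt_id t)
    exact (hFdiff (x, t)).hasFDerivAt.comp_hasDerivAt t h1
  -- smoothness of the derivative fields
  have hfderiv_smooth : ContDiff ℝ (⊤ : ℕ∞) (fun p : ℝ × ℝ => fderiv ℝ F p) :=
    hBsmooth.fderiv_right (by simp)
  have hBxsmooth : ContDiff ℝ (⊤ : ℕ∞) (fun p : ℝ × ℝ => Bx p.1 p.2) :=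
    hfderiv_smooth.clm_apply contDiff_const
  have hBtsmooth : ContDiff ℝ (⊤ : ℕ∞) (fun p : ℝ × ℝ => Bt p.1 p.2) :=
    hfderiv_smooth.clm_apply contDiff_const
  set G2 : ℝ × ℝ → ℂ := fun p => Bx p.1 p.2 with hG2def
  have hG2diff : Differentiable ℝ G2 := hBxsmooth.differentiable (by simp)
  set Bxx : ℝ → ℝ → ℂ := fun x t => fderiv ℝ G2 (x, t) (1, 0) with hBxxdef
  have hxx : ∀ x t : ℝ, HasDerivAt (fun y => Bx y t) (Bxx x t) x := by
    intro x t
    have h1 : HasDerivAt (fun z : ℝ => (z, t)) ((1 : ℝ), (0 : ℝ)) x :=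
      (hasDerivAt_id x).prodMk (hasDerivAt_const x t)
    exact (hG2diff (x, t)).hasFDerivAt.comp_hasDerivAt x h1
  have hBxxsmooth : ContDiff ℝ (⊤ : ℕ∞) (fun p : ℝ × ℝ => Bxx p.1 p.2) :=
    (hBxsmooth.fderiv_right (by simp)).clm_apply contDiff_const
  -- continuity facts
  have hBcont : Continuous (fun p : ℝ × ℝ => B p.1 p.2) := hBsmooth.continuous
  have hBtcont : Continuous (fun p : ℝ × ℝ => Bt p.1 p.2) := hBtsmooth.continuous
  have hBxcont : Continuous (fun p : ℝ × ℝ => Bx p.1 p.2) := hBxsmooth.continuous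
  -- the potential
  set V : ℝ → ℝ → ℝ := fun x t => u x t - ν / 2 * ρ x t + q * φ x t with hVdef
  -- PDE in terms of the partials
  have hBeq' : ∀ x t : ℝ, 0 ≤ t →
      Bt x t = Complex.I * ((ω : ℂ) * Bxx x t - (κ : ℂ) * (V x t : ℂ) * B x t) := by
    intro x t h0
    have h1 := hBeq x t h0
    rw [(ht x t).deriv] at h1
    have h2 : (fun y => deriv (fun z => B z t) y) = fun y => Bx y t := by
      funext y; exact (hx y t).deriv
    rw [h2, (hxx x t).deriv] at h1
    exact h1
  -- the t-derivative of the integrand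
  set D : ℝ → ℝ → ℝ := fun t x =>
    2 * ((B x t).re * (Bt x t).re + (B x t).im * (Bt x t).im) with hDdef
  have hDcont : Continuous (fun p : ℝ × ℝ => D p.2 p.1) :=
    continuous_const.mul (((Complex.continuous_re.comp hBcont).mul
      (Complex.continuous_re.comp hBtcont)).add ((Complex.continuous_im.comp hBcont).mul
      (Complex.continuous_im.comp hBtcont)))
  -- the mass
  set M : ℝ → ℝ := fun t => ∫ x in a..b, Complex.normSq (B x t) with hMdef
  have hBcont1 : ∀ t : ℝ, Continuous fun x => B x t := fun t =>
    hBcont.comp (continuous_id.prodMk continuous_const)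
  have hDcont1 : ∀ t : ℝ, Continuous fun x => D t x := fun t =>
    hDcont.comp (continuous_id.prodMk continuous_const)
  -- Step A: differentiate under the integral sign
  have hMderiv : ∀ t₀ : ℝ, HasDerivAt M (∫ x in a..b, D t₀ x) t₀ := by
    intro t₀
    obtain ⟨C, hC⟩ : ∃ C, ∀ p ∈ Set.uIcc a b ×ˢ Metric.closedBall t₀ 1, ‖D p.2 p.1‖ ≤ C :=
      (isCompact_uIcc.prod (isCompact_closedBall t₀ 1)).exists_bound_of_continuousOn
        hDcont.continuousOn
    have hres := intervalIntegral.hasDerivAt_integral_of_dominated_loc_of_deriv_le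
      (F := fun t x => Complex.normSq (B x t)) (F' := fun t x => D t x)
      (bound := fun _ => C) (μ := MeasureTheory.volume) (a := a) (b := b)
      (x₀ := t₀) (s := Metric.ball t₀ 1) (Metric.ball_mem_nhds t₀ one_pos)
      (Filter.Eventually.of_forall fun t =>
        ((Complex.continuous_normSq.comp (hBcont1 t)).aestronglyMeasurable))
      ((Complex.continuous_normSq.comp (hBcont1 t₀)).intervalIntegrable a b)
      ((hDcont1 t₀).aestronglyMeasurable)
      (Filter.Eventually.of_forall fun x hx => fun t htball =>
        hC (x, t) ⟨Set.Ioc_subset_Icc_self hx, Metric.ball_subset_closedBall htball⟩)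
      intervalIntegrable_const
      (Filter.Eventually.of_forall fun x _ => fun t _ => hasDerivAt_normSq_comp (ht x t))
    exact hres.2
  -- Step B: the derivative vanishes for `t ≥ 0`
  have hb' : a + L = b := by rw [hL]; ring
  have hDzero : ∀ t : ℝ, 0 ≤ t → (∫ x in a..b, D t x) = 0 := by
    intro t h0
    set g : ℝ → ℝ := fun y => 2 * ω * (Complex.I * (starRingEnd ℂ) (B y t) * Bx y t).re
      with hgdef
    have hg : ∀ x : ℝ, HasDerivAt g (D t x) x := by
      intro x
      have hconj : HasDerivAt (fun y => (starRingEnd ℂ) (B y t)) ((starRingEnd ℂ) (Bx x t)) x := by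
        exact
          (Complex.conjCLE.toContinuousLinearMap.hasFDerivAt.comp_hasDerivAt x (hx x t))
      have hmul : HasDerivAt (fun y => Complex.I * (starRingEnd ℂ) (B y t) * Bx y t)
          (Complex.I * (starRingEnd ℂ) (Bx x t) * Bx x t
            + Complex.I * (starRingEnd ℂ) (B x t) * Bxx x t) x :=
        (hconj.const_mul Complex.I).mul (hxx x t)
      have hre : HasDerivAt (fun y => (Complex.I * (starRingEnd ℂ) (B y t) * Bx y t).re)
          ((Complex.I * (starRingEnd ℂ) (Bx x t) * Bx x t
            + Complex.I * (starRingEnd ℂ) (B x t) * Bxx x t).re) x :=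
        Complex.reCLM.hasFDerivAt.comp_hasDerivAt x hmul
      have hfin := hre.const_mul (2 * ω)
      convert hfin using 1
      · rfl
      · rfl
      simp only [hDdef]
      rw [hBeq' x t h0]
      simp [Complex.mul_re, Complex.mul_im, Complex.add_re, Complex.sub_re, Complex.sub_im,
        Complex.I_re, Complex.I_im, Complex.ofReal_re, Complex.ofReal_im]
      ring
    have hftc : (∫ x in a..b, D t x) = g b - g a :=
      intervalIntegral.integral_eq_sub_of_hasDerivAt (fun x _ => hg x)
        ((hDcont1 t).intervalIntegrable a b)
    have hBb : B b t = B a t := by rw [← hb']; exact hBper t a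
    have hBxb : Bx b t = Bx a t := by
      have hper := periodic_deriv' (hBper t)
      have h1 : deriv (fun z => B z t) b = deriv (fun z => B z t) a := by
        rw [← hb']; exact hper a
      rw [← (hx b t).deriv, ← (hx a t).deriv]; exact h1
    rw [hftc, hgdef]
    simp [hBb, hBxb]
  -- Step C: conclude constancy
  intro t h0
  rcases eq_or_lt_of_le h0 with h | h
  · rw [← h]
  · have hdiffOn : DifferentiableOn ℝ M (Set.Icc 0 t) := fun s _ =>
      (hMderiv s).differentiableAt.differentiableWithinAt
    have hderiv0 : ∀ s ∈ Set.Ico 0 t, derivWithin M (Set.Icc 0 t) s = 0 := by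
      intro s hs
      have h1 : HasDerivAt M 0 s := by
        have h2 := hMderiv s
        rwa [hDzero s hs.1] at h2
      exact h1.hasDerivWithinAt.derivWithin ((uniqueDiffOn_Icc h) s (Set.Ico_subset_Icc_self hs))
    exact constant_of_derivWithin_zero hdiffOn hderiv0 t (Set.right_mem_Icc.2 h0)
end

section
/- Let N be a positive integer, h > 0, ω, κ, ν, q real constants, and D₂ a real symmetric N×N matrix. Suppose B : ℝ → ℂ^N and ρ, u, φ : ℝ → ℝ^N are differentiable and satisfy B'(t) = i(ω D₂ B(t) − κ(u(t) − ½ν ρ(t) + q φ(t)) · B(t)), where · denotes componentwise product. Then the discrete mass M_h(t) = h Σ_{j=0}^{N−1} |B_j(t)|² is constant in t, i.e. M_h(t) = M_h(0) for all t. -/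
open Finset

private lemma conj_sum_symm {N : ℕ} (D₂ : Matrix (Fin N) (Fin N) ℝ) (hD₂ : D₂.IsSymm)
    (b : Fin N → ℂ) :
    (starRingEnd ℂ) (∑ j, ((D₂.map (Complex.ofReal)).mulVec b) j * (starRingEnd ℂ) (b j))
      = ∑ j, ((D₂.map (Complex.ofReal)).mulVec b) j * (starRingEnd ℂ) (b j) := by
  have hsym : ∀ j k, D₂ j k = D₂ k j := fun j k => (Matrix.IsSymm.apply hD₂ j k).symm
  simp only [Matrix.mulVec, dotProduct, Matrix.map_apply, map_sum, map_mul,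
    Complex.conj_conj, Complex.conj_ofReal, Finset.sum_mul]
  rw [Finset.sum_comm]
  refine Finset.sum_congr rfl fun j _ => Finset.sum_congr rfl fun k _ => ?_
  rw [hsym j k]
  ring

/-- For the semi-discrete magnetic-field equation
`B' = i(ω D₂ B − κ(u − ½ν ρ + q φ)·B)` with `D₂` real symmetric, the discrete mass
`M_h(t) = h Σ_j |B_j(t)|²` is constant in `t`. -/
theorem semidiscrete_mass_conservation
    (N : ℕ) (hN : 0 < N) (h ω κ ν q : ℝ) (hh : 0 < h)
    (D₂ : Matrix (Fin N) (Fin N) ℝ) (hD₂ : D₂.IsSymm)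
    (B : ℝ → Fin N → ℂ) (ρ u φ : ℝ → Fin N → ℝ)
    (hBd : ∀ j, Differentiable ℝ (fun t => B t j))
    (hρd : ∀ j, Differentiable ℝ (fun t => ρ t j))
    (hud : ∀ j, Differentiable ℝ (fun t => u t j))
    (hφd : ∀ j, Differentiable ℝ (fun t => φ t j))
    (hode : ∀ (t : ℝ) (j : Fin N), deriv (fun s => B s j) t =
      Complex.I * ((ω : ℂ) * ((D₂.map (Complex.ofReal)).mulVec (B t)) j
        - (κ : ℂ) * ((u t j - ν / 2 * ρ t j + q * φ t j : ℝ) : ℂ) * B t j)) :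
    ∀ t : ℝ, h * ∑ j, Complex.normSq (B t j) = h * ∑ j, Complex.normSq (B 0 j) := by
  set F : ℝ → ℝ := fun t => ∑ j, Complex.normSq (B t j) with hF
  -- derivative of each |B j|² term
  have key : ∀ (t : ℝ), HasDerivAt F
      (∑ j, (2 : ℝ) * (deriv (fun s => B s j) t * (starRingEnd ℂ) (B t j)).re) t := by
    intro t
    apply HasDerivAt.fun_sum
    intro j _
    have hb : HasDerivAt (fun s => B s j) (deriv (fun s => B s j) t) t :=
      ((hBd j) t).hasDerivAt
    have hconj : HasDerivAt (fun s => (starRingEnd ℂ) (B s j))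
        ((starRingEnd ℂ) (deriv (fun s => B s j) t)) t := hb.star
    have hmul := hb.fun_mul hconj
    have hre := Complex.reCLM.hasFDerivAt.comp_hasDerivAt t hmul
    have heq : (⇑Complex.reCLM ∘ fun y => B y j * (starRingEnd ℂ) (B y j))
        = fun s => Complex.normSq (B s j) := by
      funext s
      simp [Function.comp, Complex.mul_conj]
    rw [heq] at hre
    convert hre using 1
    set b' := deriv (fun s => B s j) t
    set b := B t j
    have h1 : (b * (starRingEnd ℂ) b').re = (b' * (starRingEnd ℂ) b).re := by
      have : b * (starRingEnd ℂ) b' = (starRingEnd ℂ) (b' * (starRingEnd ℂ) b) := by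
        simp [map_mul, mul_comm]
      rw [this, Complex.conj_re]
    simp only [Complex.reCLM_apply, Complex.add_re]
    rw [h1]; ring
  -- the derivative is zero
  have hzero : ∀ t : ℝ, deriv F t = 0 := by
    intro t
    rw [(key t).deriv]
    have : ∑ j, (2 : ℝ) * (deriv (fun s => B s j) t * (starRingEnd ℂ) (B t j)).re
        = 2 * (∑ j, deriv (fun s => B s j) t * (starRingEnd ℂ) (B t j)).re := by
      rw [Complex.re_sum, Finset.mul_sum]
    rw [this]
    have hZ : ∑ j, deriv (fun s => B s j) t * (starRingEnd ℂ) (B t j)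
        = Complex.I * ((ω : ℂ) * (∑ j, ((D₂.map (Complex.ofReal)).mulVec (B t)) j
              * (starRingEnd ℂ) (B t j))
          - (κ : ℂ) * ∑ j, ((u t j - ν / 2 * ρ t j + q * φ t j : ℝ) : ℂ)
              * (B t j * (starRingEnd ℂ) (B t j))) := by
      rw [eq_comm, mul_sub]
      simp only [Finset.mul_sum]
      rw [← Finset.sum_sub_distrib]
      refine Finset.sum_congr rfl fun j _ => ?_
      rw [hode]; ring
    rw [hZ]
    -- the bracket is a real number
    set S := ∑ j, ((D₂.map (Complex.ofReal)).mulVec (B t)) j * (starRingEnd ℂ) (B t j) with hS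
    set W := ∑ j, ((u t j - ν / 2 * ρ t j + q * φ t j : ℝ) : ℂ)
        * (B t j * (starRingEnd ℂ) (B t j)) with hW
    have hSreal : (starRingEnd ℂ) S = S := conj_sum_symm D₂ hD₂ (B t)
    have hWreal : (starRingEnd ℂ) W = W := by
      rw [hW, map_sum]
      refine Finset.sum_congr rfl fun j _ => ?_
      simp only [map_mul, Complex.conj_conj, Complex.conj_ofReal]
      ring
    have hSim : S.im = 0 := by
      have := congrArg Complex.im hSreal
      simp only [Complex.conj_im] at this
      linarith
    have hWim : W.im = 0 := by
      have := congrArg Complex.im hWreal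
      simp only [Complex.conj_im] at this
      linarith
    simp [Complex.mul_re, Complex.sub_im, Complex.mul_im, Complex.I_re, Complex.I_im,
      hSim, hWim, Complex.ofReal_im, Complex.ofReal_re]
  have hFd : Differentiable ℝ F := fun t => (key t).differentiableAt
  intro t
  have := is_const_of_deriv_eq_zero hFd hzero t 0
  exact congrArg (fun x => h * x) this
end

section
/- Let N be a positive integer, h > 0, ω, κ, ν, β, q real constants, D₁ a real skew-symmetric N×N matrix and D₂ a real symmetric N×N matrix. Suppose B : ℝ → ℂ^N and ρ, u, φ : ℝ → ℝ^N are differentiable and satisfy B' = i(ω D₂ B − κ(u − ½ν ρ + q φ)·B), ρ' = D₁(−u + ν ρ − κ φ), u' = D₁(−β ρ + ν u + ½κν φ), φ' = 2Re(B' · conj(B)), where · denotes componentwise product. Then the semi-discrete energy E_h(t) = ω⟨D₂B, B⟩_h − κ⟨u − (ν/2)ρ + (q/2)φ, φ⟩_h − (β/2)⟨ρ, ρ⟩_h − (1/2)⟨u, u⟩_h + ν⟨u, ρ⟩_h is constant in t: E_h(t) = E_h(0) for all t. -/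
open Finset Matrix

/-- The semi-discrete quadratic energy
`E_h = ω⟨D₂B, B⟩_h − κ⟨u − (ν/2)ρ + (q/2)φ, φ⟩_h − (β/2)⟨ρ,ρ⟩_h − (1/2)⟨u,u⟩_h + ν⟨u,ρ⟩_h`. -/
noncomputable def discreteEnergy {N : ℕ} (h ω κ ν β q : ℝ)
    (D₂ : Matrix (Fin N) (Fin N) ℝ) (B : Fin N → ℂ) (ρ u φ : Fin N → ℝ) : ℝ :=
  ω * (h * ∑ j, (((D₂.map (Complex.ofReal)).mulVec B) j * (starRingEnd ℂ) (B j)).re)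
    - κ * (h * ∑ j, (u j - ν / 2 * ρ j + q / 2 * φ j) * φ j)
    - β / 2 * (h * ∑ j, ρ j * ρ j)
    - 1 / 2 * (h * ∑ j, u j * u j)
    + ν * (h * ∑ j, u j * ρ j)

private lemma auxC (w k g : ℝ) (c b : ℂ) :
    w * (2 * ((c * (starRingEnd ℂ) (Complex.I * ((w : ℂ) * c - (k : ℂ) * ((g : ℝ) : ℂ) * b))).re))
      = k * (g * (2 * (((Complex.I * ((w : ℂ) * c - (k : ℂ) * ((g : ℝ) : ℂ) * b)) * (starRingEnd ℂ) b).re))) := by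
  simp [Complex.mul_re, Complex.mul_im, Complex.sub_re, Complex.sub_im]
  ring

private lemma skewSum {N : ℕ} (D₁ : Matrix (Fin N) (Fin N) ℝ) (hD₁ : D₁ᵀ = -D₁)
    (a b : Fin N → ℝ) :
    ∑ j, (a j * ∑ k, D₁ j k * b k + b j * ∑ k, D₁ j k * a k) = 0 := by
  have hskew : ∀ j k, D₁ k j = -D₁ j k := by
    intro j k
    have := congrFun (congrFun hD₁ j) k
    simpa [Matrix.transpose_apply] using this
  have hsplit : ∑ j, (a j * ∑ k, D₁ j k * b k + b j * ∑ k, D₁ j k * a k)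
      = (∑ j, ∑ k, a j * (D₁ j k * b k)) + ∑ j, ∑ k, b j * (D₁ j k * a k) := by
    rw [← Finset.sum_add_distrib]
    exact Finset.sum_congr rfl fun j _ => by rw [Finset.mul_sum, Finset.mul_sum]
  have h1 : ∑ j, ∑ k, a j * (D₁ j k * b k) = ∑ j, ∑ k, -(b j * (D₁ j k * a k)) := by
    rw [Finset.sum_comm]
    refine Finset.sum_congr rfl fun p _ => Finset.sum_congr rfl fun m _ => ?_
    rw [hskew p m]
    ring
  rw [hsplit, h1, ← Finset.sum_add_distrib]
  refine Finset.sum_eq_zero fun j _ => ?_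
  rw [← Finset.sum_add_distrib]
  exact Finset.sum_eq_zero fun k _ => by ring

/-- The semi-discrete quadratic-auxiliary-variable Zakharov–Rubenchik
system conserves the semi-discrete energy `E_h`. -/
theorem semidiscrete_energy_conservation
    (N : ℕ) (hN : 0 < N) (h ω κ ν β q : ℝ) (hh : 0 < h)
    (D₁ D₂ : Matrix (Fin N) (Fin N) ℝ)
    (hD₁ : D₁ᵀ = -D₁) (hD₂ : D₂.IsSymm)
    (B : ℝ → Fin N → ℂ) (ρ u φ : ℝ → Fin N → ℝ)
    (hBd : ∀ j, Differentiable ℝ (fun t => B t j))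
    (hρd : ∀ j, Differentiable ℝ (fun t => ρ t j))
    (hud : ∀ j, Differentiable ℝ (fun t => u t j))
    (hφd : ∀ j, Differentiable ℝ (fun t => φ t j))
    (hBode : ∀ (t : ℝ) (j : Fin N), deriv (fun s => B s j) t =
      Complex.I * ((ω : ℂ) * ((D₂.map (Complex.ofReal)).mulVec (B t)) j
        - (κ : ℂ) * ((u t j - ν / 2 * ρ t j + q * φ t j : ℝ) : ℂ) * B t j))
    (hρode : ∀ (t : ℝ) (j : Fin N), deriv (fun s => ρ s j) t =
      (D₁.mulVec (fun m => -u t m + ν * ρ t m - κ * φ t m)) j)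
    (huode : ∀ (t : ℝ) (j : Fin N), deriv (fun s => u s j) t =
      (D₁.mulVec (fun m => -β * ρ t m + ν * u t m + κ * ν / 2 * φ t m)) j)
    (hφode : ∀ (t : ℝ) (j : Fin N), deriv (fun s => φ s j) t =
      2 * (deriv (fun s => B s j) t * (starRingEnd ℂ) (B t j)).re) :
    ∀ t : ℝ, discreteEnergy h ω κ ν β q D₂ (B t) (ρ t) (u t) (φ t)
      = discreteEnergy h ω κ ν β q D₂ (B 0) (ρ 0) (u 0) (φ 0) := by
  have key : ∀ x : ℝ,
      HasDerivAt (fun s => discreteEnergy h ω κ ν β q D₂ (B s) (ρ s) (u s) (φ s)) 0 x := by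
    intro x
    have hB : ∀ j, HasDerivAt (fun s => B s j) (deriv (fun s => B s j) x) x :=
      fun j => ((hBd j).differentiableAt).hasDerivAt
    have hρ' : ∀ j, HasDerivAt (fun s => ρ s j) (deriv (fun s => ρ s j) x) x :=
      fun j => ((hρd j).differentiableAt).hasDerivAt
    have hu' : ∀ j, HasDerivAt (fun s => u s j) (deriv (fun s => u s j) x) x :=
      fun j => ((hud j).differentiableAt).hasDerivAt
    have hφ' : ∀ j, HasDerivAt (fun s => φ s j) (deriv (fun s => φ s j) x) x :=
      fun j => ((hφd j).differentiableAt).hasDerivAt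
    -- derivative of the kinetic (complex) summand
    have hc : ∀ j, HasDerivAt
        (fun s => ((D₂.map (Complex.ofReal)).mulVec (B s)) j * (starRingEnd ℂ) (B s j))
        (((D₂.map (Complex.ofReal)).mulVec (fun k => deriv (fun s => B s k) x)) j
            * (starRingEnd ℂ) (B x j)
          + ((D₂.map (Complex.ofReal)).mulVec (B x)) j
            * (starRingEnd ℂ) (deriv (fun s => B s j) x)) x := by
      intro j
      have h1 : HasDerivAt (fun s => ((D₂.map (Complex.ofReal)).mulVec (B s)) j)
          (((D₂.map (Complex.ofReal)).mulVec (fun k => deriv (fun s => B s k) x)) j) x := by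
        simp only [Matrix.mulVec, dotProduct, Matrix.map_apply]
        exact HasDerivAt.fun_sum fun k _ => HasDerivAt.const_mul _ (hB k)
      exact h1.mul (hB j).star
    have hT1 : HasDerivAt
        (fun s => ω * (h * ∑ j, (((D₂.map (Complex.ofReal)).mulVec (B s)) j
            * (starRingEnd ℂ) (B s j)).re))
        (ω * (h * ∑ j, (((D₂.map (Complex.ofReal)).mulVec (fun k => deriv (fun s => B s k) x)) j
            * (starRingEnd ℂ) (B x j)
          + ((D₂.map (Complex.ofReal)).mulVec (B x)) j
            * (starRingEnd ℂ) (deriv (fun s => B s j) x)).re)) x := by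
      refine HasDerivAt.const_mul ω (HasDerivAt.const_mul h (HasDerivAt.fun_sum fun j _ => ?_))
      exact Complex.reCLM.hasFDerivAt.comp_hasDerivAt x (hc j)
    have hT2 : HasDerivAt
        (fun s => κ * (h * ∑ j, (u s j - ν / 2 * ρ s j + q / 2 * φ s j) * φ s j))
        (κ * (h * ∑ j, ((deriv (fun s => u s j) x - ν / 2 * deriv (fun s => ρ s j) x
            + q / 2 * deriv (fun s => φ s j) x) * φ x j
          + (u x j - ν / 2 * ρ x j + q / 2 * φ x j) * deriv (fun s => φ s j) x))) x := by
      refine HasDerivAt.const_mul κ (HasDerivAt.const_mul h (HasDerivAt.fun_sum fun j _ => ?_))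
      exact (((hu' j).sub (HasDerivAt.const_mul (ν / 2) (hρ' j))).add
        (HasDerivAt.const_mul (q / 2) (hφ' j))).mul (hφ' j)
    have hT3 : HasDerivAt (fun s => β / 2 * (h * ∑ j, ρ s j * ρ s j))
        (β / 2 * (h * ∑ j, (deriv (fun s => ρ s j) x * ρ x j
          + ρ x j * deriv (fun s => ρ s j) x))) x := by
      refine HasDerivAt.const_mul _ (HasDerivAt.const_mul h (HasDerivAt.fun_sum fun j _ => ?_))
      exact (hρ' j).mul (hρ' j)
    have hT4 : HasDerivAt (fun s => 1 / 2 * (h * ∑ j, u s j * u s j))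
        (1 / 2 * (h * ∑ j, (deriv (fun s => u s j) x * u x j
          + u x j * deriv (fun s => u s j) x))) x := by
      refine HasDerivAt.const_mul _ (HasDerivAt.const_mul h (HasDerivAt.fun_sum fun j _ => ?_))
      exact (hu' j).mul (hu' j)
    have hT5 : HasDerivAt (fun s => ν * (h * ∑ j, u s j * ρ s j))
        (ν * (h * ∑ j, (deriv (fun s => u s j) x * ρ x j
          + u x j * deriv (fun s => ρ s j) x))) x := by
      refine HasDerivAt.const_mul _ (HasDerivAt.const_mul h (HasDerivAt.fun_sum fun j _ => ?_))
      exact (hu' j).mul (hρ' j)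
    -- the explicit derivative
    have hE := ((((hT1.sub hT2).sub hT3).sub hT4).add hT5)
    -- auxiliary sum identities
    have hre : ∀ (v w : Fin N → ℂ),
        ∑ j, (((D₂.map (Complex.ofReal)).mulVec v) j * (starRingEnd ℂ) (w j)).re
          = ∑ j, ∑ k, D₂ j k * (v k * (starRingEnd ℂ) (w j)).re := by
      intro v w
      refine Finset.sum_congr rfl fun j _ => ?_
      simp only [Matrix.mulVec, dotProduct, Matrix.map_apply]
      rw [Finset.sum_mul, Complex.re_sum]
      exact Finset.sum_congr rfl fun k _ => by rw [mul_assoc, Complex.re_ofReal_mul]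
    have hswap2 : ∀ z w : ℂ, (z * (starRingEnd ℂ) w).re = (w * (starRingEnd ℂ) z).re := by
      intro z w
      simp [Complex.mul_re]
      ring
    have hS1 : (∑ j, (((D₂.map (Complex.ofReal)).mulVec (fun k => deriv (fun s => B s k) x)) j
            * (starRingEnd ℂ) (B x j)
          + ((D₂.map (Complex.ofReal)).mulVec (B x)) j
            * (starRingEnd ℂ) (deriv (fun s => B s j) x)).re)
        = ∑ j, 2 * (((D₂.map (Complex.ofReal)).mulVec (B x)) j
            * (starRingEnd ℂ) (deriv (fun s => B s j) x)).re := by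
      simp only [Complex.add_re]
      rw [Finset.sum_add_distrib]
      have h1 : ∑ j, (((D₂.map (Complex.ofReal)).mulVec (fun k => deriv (fun s => B s k) x)) j
            * (starRingEnd ℂ) (B x j)).re
          = ∑ j, (((D₂.map (Complex.ofReal)).mulVec (B x)) j
            * (starRingEnd ℂ) (deriv (fun s => B s j) x)).re := by
        rw [hre, hre, Finset.sum_comm]
        refine Finset.sum_congr rfl fun j _ => Finset.sum_congr rfl fun k _ => ?_
        rw [hD₂.apply j k, hswap2]
      rw [h1, ← Finset.sum_add_distrib]
      exact Finset.sum_congr rfl fun j _ => by ring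
    have hkey : ∀ j : Fin N,
        ω * (2 * (((D₂.map (Complex.ofReal)).mulVec (B x)) j
            * (starRingEnd ℂ) (deriv (fun s => B s j) x)).re)
          = κ * ((u x j - ν / 2 * ρ x j + q * φ x j) * deriv (fun s => φ s j) x) := by
      intro j
      rw [hφode x j, hBode x j]
      exact auxC ω κ (u x j - ν / 2 * ρ x j + q * φ x j)
        (((D₂.map (Complex.ofReal)).mulVec (B x)) j) (B x j)
    have hpull : ∀ (c : ℝ) (S : Fin N → ℝ), c * (h * ∑ j, S j) = ∑ j, h * (c * S j) := by
      intro c S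
      rw [Finset.mul_sum, Finset.mul_sum]
      exact Finset.sum_congr rfl fun j _ => by ring
    have hper : ∀ j : Fin N,
        h * (κ * ((u x j - ν / 2 * ρ x j + q * φ x j) * deriv (fun s => φ s j) x))
          - h * (κ * ((deriv (fun s => u s j) x - ν / 2 * deriv (fun s => ρ s j) x
              + q / 2 * deriv (fun s => φ s j) x) * φ x j
            + (u x j - ν / 2 * ρ x j + q / 2 * φ x j) * deriv (fun s => φ s j) x))
          - h * (β / 2 * (deriv (fun s => ρ s j) x * ρ x j
              + ρ x j * deriv (fun s => ρ s j) x))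
          - h * (1 / 2 * (deriv (fun s => u s j) x * u x j
              + u x j * deriv (fun s => u s j) x))
          + h * (ν * (deriv (fun s => u s j) x * ρ x j
              + u x j * deriv (fun s => ρ s j) x))
        = h * ((-u x j + ν * ρ x j - κ * φ x j)
              * (∑ k, D₁ j k * (-β * ρ x k + ν * u x k + κ * ν / 2 * φ x k))
            + (-β * ρ x j + ν * u x j + κ * ν / 2 * φ x j)
              * (∑ k, D₁ j k * (-u x k + ν * ρ x k - κ * φ x k))) := by
      intro j
      rw [hρode x j, huode x j]
      simp only [Matrix.mulVec, dotProduct]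
      ring
    have hD0 : (ω * (h * ∑ j, (((D₂.map (Complex.ofReal)).mulVec
            (fun k => deriv (fun s => B s k) x)) j * (starRingEnd ℂ) (B x j)
          + ((D₂.map (Complex.ofReal)).mulVec (B x)) j
            * (starRingEnd ℂ) (deriv (fun s => B s j) x)).re))
        - (κ * (h * ∑ j, ((deriv (fun s => u s j) x - ν / 2 * deriv (fun s => ρ s j) x
            + q / 2 * deriv (fun s => φ s j) x) * φ x j
          + (u x j - ν / 2 * ρ x j + q / 2 * φ x j) * deriv (fun s => φ s j) x)))
        - (β / 2 * (h * ∑ j, (deriv (fun s => ρ s j) x * ρ x j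
            + ρ x j * deriv (fun s => ρ s j) x)))
        - (1 / 2 * (h * ∑ j, (deriv (fun s => u s j) x * u x j
            + u x j * deriv (fun s => u s j) x)))
        + (ν * (h * ∑ j, (deriv (fun s => u s j) x * ρ x j
            + u x j * deriv (fun s => ρ s j) x))) = 0 := by
      rw [hS1]
      rw [hpull, hpull, hpull, hpull, hpull]
      simp only [hkey]
      rw [← Finset.sum_sub_distrib, ← Finset.sum_sub_distrib, ← Finset.sum_sub_distrib,
        ← Finset.sum_add_distrib]
      refine (Finset.sum_congr rfl fun j _ => hper j).trans ?_
      rw [← Finset.mul_sum]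
      have h0 := skewSum D₁ hD₁ (fun m => -u x m + ν * ρ x m - κ * φ x m)
        (fun m => -β * ρ x m + ν * u x m + κ * ν / 2 * φ x m)
      simp only [h0, mul_zero]
    rw [hD0] at hE
    simpa only [discreteEnergy, Pi.sub_def, Pi.add_def] using hE
  intro t
  exact is_const_of_deriv_eq_zero (fun x => (key x).differentiableAt)
    (fun x => (key x).deriv) t 0
end

section
/- Let s, N be positive integers, τ, h > 0, ω, κ, ν, β, q real constants, D₁, D₂ real N×N matrices with D₂ symmetric, and a ∈ ℝ^{s×s}, b ∈ ℝ^s Runge–Kutta coefficients satisfying b_i a_{ij} + b_j a_{ji} = b_i b_j for all i, j. Suppose Bⁿ, B^{n+1}, B_{n1},…,B_{ns} ∈ ℂ^N, ρⁿ, uⁿ, φⁿ, ρ_{ni}, u_{ni}, φ_{ni} ∈ ℝ^N and stage slopes k_i¹ ∈ ℂ^N satisfy the FPRK-s scheme: B_{ni} = Bⁿ + τ Σ_j a_{ij} k_j¹ with k_i¹ = i(ω D₂ B_{ni} − κ(u_{ni} − ½ν ρ_{ni} + q φ_{ni})·B_{ni}), and B^{n+1} = Bⁿ + τ Σ_i b_i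 k_i¹, where · denotes componentwise product. Then the discrete mass is conserved: h Σ_{j=0}^{N−1} |B_j^{n+1}|² = h Σ_{j=0}^{N−1} |B_jⁿ|². -/
open Finset

private lemma re_mul_conj_comm (z w : ℂ) :
    (z * (starRingEnd ℂ) w).re = (w * (starRingEnd ℂ) z).re := by
  simp [Complex.mul_re, Complex.conj_re, Complex.conj_im]; ring

private lemma im_mul_conj_anticomm (z w : ℂ) :
    (z * (starRingEnd ℂ) w).im = -((w * (starRingEnd ℂ) z).im) := by
  simp [Complex.mul_im, Complex.conj_re, Complex.conj_im]; ring

private lemma normSq_eq_re_mul_conj (z : ℂ) :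
    Complex.normSq z = (z * (starRingEnd ℂ) z).re := by
  rw [Complex.mul_conj, Complex.ofReal_re]

/-- The FPRK-s scheme with symplectic Runge–Kutta coefficients conserves
the discrete mass `h Σ_j |B_j|²`: if `B_{ni} = Bⁿ + τ Σ_m a_{im} k_m¹`,
`k_i¹ = i(ω D₂ B_{ni} − κ(u_{ni} − ½ν ρ_{ni} + q φ_{ni})·B_{ni})`,
`B^{n+1} = Bⁿ + τ Σ_i b_i k_i¹` and `D₂` is real symmetric, then
`h Σ_j |B_j^{n+1}|² = h Σ_j |B_jⁿ|²`. -/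
theorem FPRK_discrete_mass_conservation
    (s N : ℕ) (hs : 0 < s) (hN : 0 < N)
    (τ h ω κ ν β q : ℝ) (hτ : 0 < τ) (hh : 0 < h)
    (D₁ D₂ : Matrix (Fin N) (Fin N) ℝ) (hD₂ : D₂.IsSymm)
    (a : Fin s → Fin s → ℝ) (b : Fin s → ℝ)
    (hsymp : ∀ i j, b i * a i j + b j * a j i = b i * b j)
    (Bn B1 : Fin N → ℂ) (Bni : Fin s → Fin N → ℂ)
    (ρn un φn : Fin N → ℝ) (ρni uni φni : Fin s → Fin N → ℝ)
    (k1 : Fin s → Fin N → ℂ)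
    (hBni : ∀ i j, Bni i j = Bn j + (τ : ℂ) * ∑ m, ((a i m : ℝ) : ℂ) * k1 m j)
    (hk1 : ∀ i j, k1 i j = Complex.I *
      ((ω : ℂ) * ((D₂.map (Complex.ofReal)).mulVec (Bni i)) j
        - (κ : ℂ) * ((uni i j - ν / 2 * ρni i j + q * φni i j : ℝ) : ℂ) * Bni i j))
    (hB1 : ∀ j, B1 j = Bn j + (τ : ℂ) * ∑ i, ((b i : ℝ) : ℂ) * k1 i j) :
    h * ∑ j, Complex.normSq (B1 j) = h * ∑ j, Complex.normSq (Bn j) := by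
  set P : Fin s → Fin s → ℝ :=
    fun i m => ∑ j, (k1 i j * (starRingEnd ℂ) (k1 m j)).re with hPdef
  set Q : Fin s → ℝ :=
    fun i => ∑ j, (k1 i j * (starRingEnd ℂ) (Bn j)).re with hQdef
  have hPsymm : ∀ i m, P i m = P m i := by
    intro i m
    simp only [hPdef]
    exact Finset.sum_congr rfl fun j _ => re_mul_conj_comm _ _
  -- Step 1: ⟨k1 i, Bni i⟩ has zero real part
  have hA : ∀ i, ∑ j, (k1 i j * (starRingEnd ℂ) (Bni i j)).re = 0 := by
    intro i
    have hterm : ∀ j, (k1 i j * (starRingEnd ℂ) (Bni i j)).re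
        = -(ω * ∑ l, D₂ j l * (Bni i l * (starRingEnd ℂ) (Bni i j)).im) := by
      intro j
      rw [hk1 i j]
      have hMv : (D₂.map (Complex.ofReal)).mulVec (Bni i) j
          = ∑ l, ((D₂ j l : ℝ) : ℂ) * Bni i l := by
        simp [Matrix.mulVec, dotProduct]
      rw [hMv]
      rw [mul_assoc, Complex.I_mul_re]
      rw [sub_mul, Complex.sub_im]
      have h2 : ((κ : ℂ) * ((uni i j - ν / 2 * ρni i j + q * φni i j : ℝ) : ℂ) * Bni i j
          * (starRingEnd ℂ) (Bni i j)).im = 0 := by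
        rw [mul_assoc, Complex.mul_conj]
        simp [← Complex.ofReal_mul]
      rw [h2]
      have h1 : ((ω : ℂ) * (∑ l, ((D₂ j l : ℝ) : ℂ) * Bni i l)
          * (starRingEnd ℂ) (Bni i j)).im
          = ω * ∑ l, D₂ j l * (Bni i l * (starRingEnd ℂ) (Bni i j)).im := by
        rw [mul_assoc, Complex.im_ofReal_mul, Finset.sum_mul, Complex.im_sum]
        congr 1
        refine Finset.sum_congr rfl fun l _ => ?_
        rw [mul_assoc, Complex.im_ofReal_mul]
      rw [h1]; ring
    rw [Finset.sum_congr rfl fun j _ => hterm j]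
    have hT : (∑ j, ∑ l, D₂ j l * (Bni i l * (starRingEnd ℂ) (Bni i j)).im)
        = -(∑ j, ∑ l, D₂ j l * (Bni i l * (starRingEnd ℂ) (Bni i j)).im) := by
      conv_lhs => rw [Finset.sum_comm]
      rw [← Finset.sum_neg_distrib]
      refine Finset.sum_congr rfl fun j _ => ?_
      rw [← Finset.sum_neg_distrib]
      refine Finset.sum_congr rfl fun l _ => ?_
      rw [hD₂.apply j l, im_mul_conj_anticomm]
      ring
    have hT0 : (∑ j, ∑ l, D₂ j l * (Bni i l * (starRingEnd ℂ) (Bni i j)).im) = 0 := by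
      linarith
    rw [Finset.sum_neg_distrib, ← Finset.mul_sum, hT0]
    ring
  -- Step 2: Q i = -τ * ∑ m, a i m * P i m
  have hQA : ∀ i, Q i = -(τ * ∑ m, a i m * P i m) := by
    intro i
    have hA' := hA i
    have hexp : ∀ j, (k1 i j * (starRingEnd ℂ) (Bni i j)).re
        = (k1 i j * (starRingEnd ℂ) (Bn j)).re
          + τ * ∑ m, a i m * (k1 i j * (starRingEnd ℂ) (k1 m j)).re := by
      intro j
      rw [hBni i j, map_add, mul_add, Complex.add_re]
      congr 1
      rw [map_mul, Complex.conj_ofReal, mul_left_comm, Complex.re_ofReal_mul]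
      congr 1
      rw [map_sum, Finset.mul_sum, Complex.re_sum]
      refine Finset.sum_congr rfl fun m _ => ?_
      rw [map_mul, Complex.conj_ofReal, mul_left_comm, Complex.re_ofReal_mul]
    rw [Finset.sum_congr rfl fun j _ => hexp j, Finset.sum_add_distrib] at hA'
    have hswap : ∑ j, τ * ∑ m, a i m * (k1 i j * (starRingEnd ℂ) (k1 m j)).re
        = τ * ∑ m, a i m * P i m := by
      rw [← Finset.mul_sum]
      congr 1
      rw [Finset.sum_comm]
      refine Finset.sum_congr rfl fun m _ => ?_
      rw [← Finset.mul_sum]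
    rw [hswap] at hA'
    simp only [hQdef]
    linarith
  -- Step 3: pointwise expansion of the mass
  have hterm : ∀ j, Complex.normSq (B1 j)
      = Complex.normSq (Bn j)
        + (2 * τ * ∑ i, b i * (k1 i j * (starRingEnd ℂ) (Bn j)).re
          + τ^2 * ∑ i, ∑ m, b i * b m * (k1 i j * (starRingEnd ℂ) (k1 m j)).re) := by
    intro j
    rw [hB1 j, Complex.normSq_add]
    have hS : Complex.normSq ((τ : ℂ) * ∑ i, ((b i : ℝ) : ℂ) * k1 i j)
        = τ^2 * ∑ i, ∑ m, b i * b m * (k1 i j * (starRingEnd ℂ) (k1 m j)).re := by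
      rw [normSq_eq_re_mul_conj, map_mul, Complex.conj_ofReal, map_sum,
        mul_mul_mul_comm, ← Complex.ofReal_mul, Complex.re_ofReal_mul,
        Finset.sum_mul_sum, Complex.re_sum]
      rw [show τ * τ = τ^2 by ring]
      congr 1
      refine Finset.sum_congr rfl fun i _ => ?_
      rw [Complex.re_sum]
      refine Finset.sum_congr rfl fun m _ => ?_
      rw [map_mul, Complex.conj_ofReal]
      rw [show ((b i:ℝ):ℂ) * k1 i j * (((b m:ℝ):ℂ) * (starRingEnd ℂ) (k1 m j))
          = ((b i * b m:ℝ):ℂ) * (k1 i j * (starRingEnd ℂ) (k1 m j)) by push_cast; ring]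
      rw [Complex.re_ofReal_mul]
    have hC : (Bn j * (starRingEnd ℂ) ((τ:ℂ) * ∑ i, ((b i:ℝ):ℂ) * k1 i j)).re
        = τ * ∑ i, b i * (k1 i j * (starRingEnd ℂ) (Bn j)).re := by
      rw [map_mul, Complex.conj_ofReal, map_sum, mul_left_comm,
        Complex.re_ofReal_mul, Finset.mul_sum, Complex.re_sum]
      congr 1
      refine Finset.sum_congr rfl fun i _ => ?_
      rw [map_mul, Complex.conj_ofReal, mul_left_comm, Complex.re_ofReal_mul,
        re_mul_conj_comm]
    rw [hS, hC]
    ring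
  -- Step 4: sum over j and rearrange
  have hexpand : ∑ j, Complex.normSq (B1 j)
      = ∑ j, Complex.normSq (Bn j)
        + (2 * τ * ∑ i, b i * Q i + τ^2 * ∑ i, ∑ m, b i * b m * P i m) := by
    rw [Finset.sum_congr rfl fun j _ => hterm j, Finset.sum_add_distrib,
      Finset.sum_add_distrib]
    congr 1
    congr 1
    · rw [← Finset.mul_sum]
      congr 1
      rw [Finset.sum_comm]
      refine Finset.sum_congr rfl fun i _ => ?_
      rw [← Finset.mul_sum]
    · rw [← Finset.mul_sum]
      congr 1
      rw [Finset.sum_comm]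
      refine Finset.sum_congr rfl fun i _ => ?_
      rw [Finset.sum_comm]
      refine Finset.sum_congr rfl fun m _ => ?_
      rw [← Finset.mul_sum]
  -- Step 5: algebra with symplecticity
  have hX : ∑ i, b i * Q i = -(τ * ∑ i, ∑ m, b i * a i m * P i m) := by
    have hXi : ∀ i, b i * Q i = -(τ * ∑ m, b i * a i m * P i m) := by
      intro i
      rw [hQA i, mul_neg, ← mul_assoc, mul_comm (b i) τ, mul_assoc, Finset.mul_sum]
      congr 2
      exact Finset.sum_congr rfl fun m _ => by ring
    rw [Finset.sum_congr rfl fun i _ => hXi i, Finset.sum_neg_distrib,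
      ← Finset.mul_sum]
  have hY : ∑ i, ∑ m, b i * b m * P i m = 2 * ∑ i, ∑ m, b i * a i m * P i m := by
    have step1 : ∑ i, ∑ m, b i * b m * P i m
        = ∑ i, ∑ m, (b i * a i m * P i m + b m * a m i * P i m) := by
      refine Finset.sum_congr rfl fun i _ => Finset.sum_congr rfl fun m _ => ?_
      rw [← hsymp i m]; ring
    rw [step1]
    simp only [Finset.sum_add_distrib]
    have step2 : ∑ i, ∑ m, b m * a m i * P i m = ∑ i, ∑ m, b i * a i m * P i m := by
      rw [Finset.sum_comm]
      exact Finset.sum_congr rfl fun i _ => Finset.sum_congr rfl fun m _ => by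
        rw [hPsymm m i]
    rw [step2]; ring
  rw [hexpand, hX, hY]
  ring
end

section
/- Let s, N be positive integers, τ > 0, and a ∈ ℝ^{s×s}, b ∈ ℝ^s Runge–Kutta coefficients satisfying b_i a_{ij} + b_j a_{ji} = b_i b_j for all i, j. Suppose Bⁿ, B^{n+1}, B_{n1},…,B_{ns}, k₁¹,…,k_s¹ ∈ ℂ^N and φⁿ, φ^{n+1}, k₁⁴,…,k_s⁴ ∈ ℝ^N satisfy B_{ni} = Bⁿ + τ Σ_j a_{ij} k_j¹, k_i⁴ = 2Re(conj(B_{ni})·k_i¹) (componentwise product), B^{n+1} = Bⁿ + τ Σ_i b_i k_i¹ and φ^{n+1} = φⁿ + τ Σ_i b_i k_i⁴. Then φ^{n+1} − |B^{n+1}|² = φⁿ − |Bⁿ|² componentwise (where |B|² denotes the vector with components |B_j|²). In particular, if φⁿ = |Bⁿ|² then φ^{n+1} = |B^{n+1}|². -/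
open Finset

/-- In the FPRK-s scheme with symplectic Runge–Kutta coefficients, the
difference `φ − |B|²` is preserved componentwise from one step to the next; in particular
`φⁿ = |Bⁿ|²` implies `φ^{n+1} = |B^{n+1}|²`. -/
theorem FPRK_auxiliary_variable_consistency
    (s N : ℕ) (hs : 0 < s) (hN : 0 < N) (τ : ℝ) (hτ : 0 < τ)
    (a : Fin s → Fin s → ℝ) (b : Fin s → ℝ)
    (hsymp : ∀ i j, b i * a i j + b j * a j i = b i * b j)
    (Bn B1 : Fin N → ℂ) (Bni : Fin s → Fin N → ℂ)
    (k1 : Fin s → Fin N → ℂ)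
    (φn φ1 : Fin N → ℝ) (k4 : Fin s → Fin N → ℝ)
    (hBni : ∀ i j, Bni i j = Bn j + (τ : ℂ) * ∑ m, ((a i m : ℝ) : ℂ) * k1 m j)
    (hk4 : ∀ i j, k4 i j = 2 * ((starRingEnd ℂ) (Bni i j) * k1 i j).re)
    (hB1 : ∀ j, B1 j = Bn j + (τ : ℂ) * ∑ i, ((b i : ℝ) : ℂ) * k1 i j)
    (hφ1 : ∀ j, φ1 j = φn j + τ * ∑ i, b i * k4 i j) :
    (∀ j, φ1 j - Complex.normSq (B1 j) = φn j - Complex.normSq (Bn j))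
    ∧ ((∀ j, φn j = Complex.normSq (Bn j)) → ∀ j, φ1 j = Complex.normSq (B1 j)) := by
  have hns : ∀ z : ℂ, Complex.normSq z = ((starRingEnd ℂ) z * z).re := by
    intro z; simp [Complex.normSq_apply, Complex.mul_re]
  have key : ∀ j, φ1 j - Complex.normSq (B1 j) = φn j - Complex.normSq (Bn j) := by
    intro j
    -- notation
    set r : Fin s → ℝ := fun i => ((starRingEnd ℂ) (Bn j) * k1 i j).re with hr
    set R : Fin s → Fin s → ℝ := fun i m => ((starRingEnd ℂ) (k1 i j) * k1 m j).re with hR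
    have Rsymm : ∀ i m, R i m = R m i := by
      intro i m; simp only [hR, Complex.mul_re, Complex.conj_re, Complex.conj_im]; ring
    -- expand k4
    have hk4' : ∀ i, k4 i j = 2 * r i + 2 * τ * ∑ m, a i m * R m i := by
      intro i
      rw [hk4, hBni]
      simp only [map_add, map_mul, map_sum, Complex.conj_ofReal, add_mul,
        Finset.sum_mul, Complex.add_re, Complex.re_ofReal_mul, Complex.re_sum,
        mul_assoc]
      ring
    -- expand normSq B1
    have hB1' : Complex.normSq (B1 j) = Complex.normSq (Bn j)
        + 2 * τ * ∑ i, b i * r i + τ^2 * ∑ i, ∑ m, b i * b m * R i m := by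
      have e1 : ∀ (z w : ℂ) (t : ℝ), Complex.normSq (z + (t:ℂ)*w)
          = Complex.normSq z + 2*t*((starRingEnd ℂ) z * w).re + t^2 * Complex.normSq w := by
        intro z w t
        simp only [Complex.normSq_apply, Complex.add_re, Complex.add_im, Complex.mul_re,
          Complex.mul_im, Complex.conj_re, Complex.conj_im, Complex.ofReal_re,
          Complex.ofReal_im]
        ring
      have e2 : ((starRingEnd ℂ) (Bn j) * ∑ i, ((b i : ℝ) : ℂ) * k1 i j).re
          = ∑ i, b i * r i := by
        rw [Finset.mul_sum, Complex.re_sum]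
        apply Finset.sum_congr rfl; intro i _
        rw [show (starRingEnd ℂ) (Bn j) * (((b i : ℝ) : ℂ) * k1 i j)
            = ((b i : ℝ) : ℂ) * ((starRingEnd ℂ) (Bn j) * k1 i j) by ring,
          Complex.re_ofReal_mul]
      have e3 : Complex.normSq (∑ i, ((b i : ℝ) : ℂ) * k1 i j)
          = ∑ i, ∑ m, b i * b m * R i m := by
        rw [hns, map_sum, Finset.sum_mul_sum, Complex.re_sum]
        apply Finset.sum_congr rfl; intro i _
        rw [Complex.re_sum]
        apply Finset.sum_congr rfl; intro m _
        rw [show (starRingEnd ℂ) (((b i : ℝ) : ℂ) * k1 i j) * (((b m : ℝ) : ℂ) * k1 m j)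
            = ((b i : ℝ) : ℂ) * (((b m : ℝ) : ℂ) * ((starRingEnd ℂ) (k1 i j) * k1 m j)) by
            simp [map_mul, Complex.conj_ofReal]; ring,
          Complex.re_ofReal_mul, Complex.re_ofReal_mul]
        ring
      rw [hB1, e1, e2, e3]
    -- the double-sum identity from symplecticity
    have hdouble : ∑ i, ∑ m, 2 * (b i * a i m) * R m i
        = ∑ i, ∑ m, b i * b m * R i m := by
      have swap : ∑ i, ∑ m, (b i * a i m) * R m i
          = ∑ i, ∑ m, (b m * a m i) * R i m := by
        rw [Finset.sum_comm]
      calc ∑ i, ∑ m, 2 * (b i * a i m) * R m i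
          = ∑ i, ∑ m, ((b i * a i m) * R i m + (b i * a i m) * R m i) := by
            apply Finset.sum_congr rfl; intro i _
            apply Finset.sum_congr rfl; intro m _
            rw [Rsymm i m]; ring
        _ = ∑ i, ∑ m, (b i * a i m) * R i m + ∑ i, ∑ m, (b i * a i m) * R m i := by
            rw [← Finset.sum_add_distrib]
            apply Finset.sum_congr rfl; intro i _
            rw [← Finset.sum_add_distrib]
        _ = ∑ i, ∑ m, (b i * a i m) * R i m + ∑ i, ∑ m, (b m * a m i) * R i m := by
            rw [swap]
        _ = ∑ i, ∑ m, b i * b m * R i m := by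
            rw [← Finset.sum_add_distrib]
            apply Finset.sum_congr rfl; intro i _
            rw [← Finset.sum_add_distrib]
            apply Finset.sum_congr rfl; intro m _
            rw [← add_mul, hsymp i m]
    -- put it together
    rw [hφ1, hB1']
    simp only [hk4']
    have expand : ∑ i, b i * (2 * r i + 2 * τ * ∑ m, a i m * R m i)
        = 2 * ∑ i, b i * r i + τ * ∑ i, ∑ m, 2 * (b i * a i m) * R m i := by
      rw [Finset.mul_sum, Finset.mul_sum, ← Finset.sum_add_distrib]
      apply Finset.sum_congr rfl; intro i _
      rw [Finset.mul_sum, Finset.mul_sum]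
      rw [mul_add]
      congr 1
      · ring
      · rw [Finset.mul_sum]
        apply Finset.sum_congr rfl; intro m _
        ring
    rw [expand, hdouble]
    ring
  exact ⟨key, fun h j => by have := key j; rw [h j] at this; linarith⟩
end

section
/- Let s, N be positive integers, τ, h > 0, ω, κ, ν, β, q real constants, D₁ a real skew-symmetric N×N matrix, D₂ a real symmetric N×N matrix, and a ∈ ℝ^{s×s}, b ∈ ℝ^s Runge–Kutta coefficients satisfying b_i a_{ij} + b_j a_{ji} = b_i b_j for all i, j. Suppose Bⁿ, B^{n+1} ∈ ℂ^N, ρⁿ, uⁿ, φⁿ, ρ^{n+1}, u^{n+1}, φ^{n+1} ∈ ℝ^N together with internal stages and slopes satisfy the full FPRK-s scheme: B_{ni} = Bⁿ + τ Σ_j a_{ij} k_j¹, ρ_{ni} = ρⁿ + τ Σ_j a_{ij} k_j², u_{ni} = uⁿ + τ Σ_j a_{ij} k_j³, φ_{ni} = φⁿ + τ Σ_j a_{ij} k_j⁴, with k_i¹ = i(ω D₂ B_{ni} − κ(u_{ni} − ½ν ρ_{ni} + q φ_{ni})·B_{ni}), k_i² = D₁(−u_{ni} + ν ρ_{ni}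 − κ φ_{ni}), k_i³ = D₁(−β ρ_{ni} + ν u_{ni} + ½κν φ_{ni}), k_i⁴ = 2Re(conj(B_{ni})·k_i¹), and B^{n+1} = Bⁿ + τ Σ_i b_i k_i¹, ρ^{n+1} = ρⁿ + τ Σ_i b_i k_i², u^{n+1} = uⁿ + τ Σ_i b_i k_i³, φ^{n+1} = φⁿ + τ Σ_i b_i k_i⁴. Then the discrete quadratic energy E_h = ω⟨D₂B, B⟩_h − κ⟨u − (ν/2)ρ + (q/2)φ, φ⟩_h − (β/2)⟨ρ, ρ⟩_h − (1/2)⟨u, u⟩_h + ν⟨u, ρ⟩_h satisfies E_h^{n+1} = E_hⁿ, where E_hⁿ and E_h^{n+1} are evaluated at (Bⁿ, ρⁿ, uⁿ, φⁿ) and (B^{n+1}, ρ^{n+1}, u^{n+1}, φ^{n+1}) respectively. -/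
open Finset Matrix

/-! ### Auxiliary machinery -/

/-- Abstract conservation of a quadratic invariant by a symplectic Runge–Kutta step. -/
lemma quad_conserve {V : Type*} [AddCommGroup V] [Module ℝ V] {s : ℕ}
    (Q : V → V → ℝ)
    (Qsymm : ∀ x y, Q x y = Q y x)
    (Qaddl : ∀ x y z, Q (x + y) z = Q x z + Q y z)
    (Qsmull : ∀ (c : ℝ) x z, Q (c • x) z = c * Q x z)
    (a : Fin s → Fin s → ℝ) (b : Fin s → ℝ)
    (hsymp : ∀ i j, b i * a i j + b j * a j i = b i * b j)
    (τ : ℝ) (yn y1 : V) (Y k : Fin s → V)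
    (hY : ∀ i, Y i = yn + τ • ∑ m, a i m • k m)
    (hy1 : y1 = yn + τ • ∑ i, b i • k i)
    (hstage : ∀ i, Q (Y i) (k i) = 0) :
    Q y1 y1 = Q yn yn := by
  have Qaddr : ∀ x y z, Q x (y + z) = Q x y + Q x z := by
    intro x y z; rw [Qsymm, Qaddl, Qsymm x y, Qsymm x z]
  have Q0l : ∀ z, Q 0 z = 0 := by
    intro z; have := Qsmull 0 z z; simpa using this
  have Qsuml : ∀ (f : Fin s → V) (z : V), Q (∑ i, f i) z = ∑ i, Q (f i) z := by
    intro f z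
    classical
    induction (Finset.univ : Finset (Fin s)) using Finset.induction_on with
    | empty => simp [Q0l]
    | @insert x t h ih => rw [Finset.sum_insert h, Finset.sum_insert h, Qaddl, ih]
  have expandl : ∀ z : V, Q (τ • ∑ i, b i • k i) z = τ * ∑ i, b i * Q (k i) z := by
    intro z
    rw [Qsmull, Qsuml]
    congr 1
    exact Finset.sum_congr rfl fun i _ => Qsmull _ _ _
  have hQyk : ∀ i, Q yn (k i) = -(τ * ∑ m, a i m * Q (k m) (k i)) := by
    intro i
    have h0 := hstage i
    rw [hY i, Qaddl, Qsmull, Qsuml] at h0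
    have : ∑ m, Q (a i m • k m) (k i) = ∑ m, a i m * Q (k m) (k i) :=
      Finset.sum_congr rfl fun m _ => Qsmull _ _ _
    rw [this] at h0
    linarith
  set T : V := τ • ∑ i, b i • k i with hT
  have hexp : Q y1 y1 = Q yn yn + 2 * (τ * ∑ i, b i * Q (k i) yn)
      + τ * ∑ i, b i * (τ * ∑ j, b j * Q (k j) (k i)) := by
    rw [hy1, Qaddl, Qaddr, Qaddr]
    have h1 : Q T yn = τ * ∑ i, b i * Q (k i) yn := expandl yn
    have h2 : Q yn T = τ * ∑ i, b i * Q (k i) yn := by rw [Qsymm]; exact h1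
    have h3 : Q T T = τ * ∑ i, b i * (τ * ∑ j, b j * Q (k j) (k i)) := by
      rw [expandl T]
      congr 1
      refine Finset.sum_congr rfl fun i _ => ?_
      rw [Qsymm (k i) T, expandl (k i)]
    rw [h1, h2, h3]; ring
  have hcross : ∑ i, b i * Q (k i) yn
      = -(τ * ∑ i, ∑ m, b i * (a i m * Q (k m) (k i))) := by
    calc ∑ i, b i * Q (k i) yn = ∑ i, b i * Q yn (k i) :=
          Finset.sum_congr rfl fun i _ => by rw [Qsymm]
      _ = ∑ i, b i * -(τ * ∑ m, a i m * Q (k m) (k i)) :=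
          Finset.sum_congr rfl fun i _ => by rw [hQyk]
      _ = -(τ * ∑ i, ∑ m, b i * (a i m * Q (k m) (k i))) := by
          simp only [Finset.mul_sum, mul_neg, ← Finset.sum_neg_distrib, neg_mul]
          exact Finset.sum_congr rfl fun i _ =>
            Finset.sum_congr rfl fun m _ => by ring
  have hdouble : ∑ i, ∑ j, b i * (b j * Q (k j) (k i))
      = 2 * ∑ i, ∑ m, b i * (a i m * Q (k m) (k i)) := by
    have hswap : ∑ i, ∑ m, b i * (a i m * Q (k m) (k i))
        = ∑ i, ∑ m, b m * (a m i * Q (k m) (k i)) := by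
      rw [Finset.sum_comm]
      exact Finset.sum_congr rfl fun i _ => Finset.sum_congr rfl fun m _ => by
        rw [Qsymm (k i) (k m)]
    calc ∑ i, ∑ j, b i * (b j * Q (k j) (k i))
        = ∑ i, ∑ m, (b i * a i m + b m * a m i) * Q (k m) (k i) := by
          refine Finset.sum_congr rfl fun i _ => Finset.sum_congr rfl fun m _ => ?_
          rw [hsymp i m]; ring
      _ = (∑ i, ∑ m, b i * (a i m * Q (k m) (k i)))
          + ∑ i, ∑ m, b m * (a m i * Q (k m) (k i)) := by
          rw [← Finset.sum_add_distrib]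
          refine Finset.sum_congr rfl fun i _ => ?_
          rw [← Finset.sum_add_distrib]
          exact Finset.sum_congr rfl fun m _ => by ring
      _ = 2 * ∑ i, ∑ m, b i * (a i m * Q (k m) (k i)) := by rw [← hswap]; ring
  have hsq : ∑ i, b i * (τ * ∑ j, b j * Q (k j) (k i))
      = τ * ∑ i, ∑ j, b i * (b j * Q (k j) (k i)) := by
    rw [Finset.mul_sum]
    refine Finset.sum_congr rfl fun i _ => ?_
    rw [Finset.mul_sum, Finset.mul_sum, Finset.mul_sum]
    exact Finset.sum_congr rfl fun j _ => by ring
  rw [hexp, hcross, hsq, hdouble]; ring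

/-- The state space of the scheme as a real vector space. -/
abbrev Vst (N : ℕ) := (Fin N → ℂ) × (Fin N → ℝ) × (Fin N → ℝ) × (Fin N → ℝ)

/-- The symmetric bilinear form whose diagonal is the discrete energy (without `h`). -/
noncomputable def Qf {N : ℕ} (ω κ ν β q : ℝ) (D₂ : Matrix (Fin N) (Fin N) ℝ)
    (x y : Vst N) : ℝ :=
  ω * ∑ j, ∑ m, D₂ j m * ((x.1 m).re * (y.1 j).re + (x.1 m).im * (y.1 j).im)
  - κ / 2 * ∑ j, (x.2.2.1 j * y.2.2.2 j + y.2.2.1 j * x.2.2.2 j)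
  + κ * ν / 4 * ∑ j, (x.2.1 j * y.2.2.2 j + y.2.1 j * x.2.2.2 j)
  - κ * q / 2 * ∑ j, x.2.2.2 j * y.2.2.2 j
  - β / 2 * ∑ j, x.2.1 j * y.2.1 j
  - 1 / 2 * ∑ j, x.2.2.1 j * y.2.2.1 j
  + ν / 2 * ∑ j, (x.2.2.1 j * y.2.1 j + y.2.2.1 j * x.2.1 j)

lemma Qf_symm {N : ℕ} (ω κ ν β q : ℝ) (D₂ : Matrix (Fin N) (Fin N) ℝ) (hD₂ : D₂.IsSymm)
    (x y : Vst N) : Qf ω κ ν β q D₂ x y = Qf ω κ ν β q D₂ y x := by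
  unfold Qf
  have hB : ∑ j, ∑ m, D₂ j m * ((x.1 m).re * (y.1 j).re + (x.1 m).im * (y.1 j).im)
      = ∑ j, ∑ m, D₂ j m * ((y.1 m).re * (x.1 j).re + (y.1 m).im * (x.1 j).im) := by
    rw [Finset.sum_comm]
    refine Finset.sum_congr rfl fun j _ => Finset.sum_congr rfl fun m _ => ?_
    rw [hD₂.apply j m]; ring
  have h2 : ∑ j, (x.2.2.1 j * y.2.2.2 j + y.2.2.1 j * x.2.2.2 j)
      = ∑ j, (y.2.2.1 j * x.2.2.2 j + x.2.2.1 j * y.2.2.2 j) :=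
    Finset.sum_congr rfl fun j _ => by ring
  have h3 : ∑ j, (x.2.1 j * y.2.2.2 j + y.2.1 j * x.2.2.2 j)
      = ∑ j, (y.2.1 j * x.2.2.2 j + x.2.1 j * y.2.2.2 j) :=
    Finset.sum_congr rfl fun j _ => by ring
  have h4 : ∑ j, x.2.2.2 j * y.2.2.2 j = ∑ j, y.2.2.2 j * x.2.2.2 j :=
    Finset.sum_congr rfl fun j _ => by ring
  have h5 : ∑ j, x.2.1 j * y.2.1 j = ∑ j, y.2.1 j * x.2.1 j :=
    Finset.sum_congr rfl fun j _ => by ring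
  have h6 : ∑ j, x.2.2.1 j * y.2.2.1 j = ∑ j, y.2.2.1 j * x.2.2.1 j :=
    Finset.sum_congr rfl fun j _ => by ring
  have h7 : ∑ j, (x.2.2.1 j * y.2.1 j + y.2.2.1 j * x.2.1 j)
      = ∑ j, (y.2.2.1 j * x.2.1 j + x.2.2.1 j * y.2.1 j) :=
    Finset.sum_congr rfl fun j _ => by ring
  rw [hB, h2, h3, h4, h5, h6, h7]

lemma Qf_addl {N : ℕ} (ω κ ν β q : ℝ) (D₂ : Matrix (Fin N) (Fin N) ℝ) (x y z : Vst N) :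
    Qf ω κ ν β q D₂ (x + y) z = Qf ω κ ν β q D₂ x z + Qf ω κ ν β q D₂ y z := by
  unfold Qf
  simp only [Prod.fst_add, Prod.snd_add, Pi.add_apply, Complex.add_re, Complex.add_im]
  simp only [mul_add, add_mul, Finset.sum_add_distrib]
  ring

lemma Qf_smull {N : ℕ} (ω κ ν β q : ℝ) (D₂ : Matrix (Fin N) (Fin N) ℝ) (c : ℝ)
    (x z : Vst N) : Qf ω κ ν β q D₂ (c • x) z = c * Qf ω κ ν β q D₂ x z := by
  unfold Qf
  simp only [Prod.smul_fst, Prod.smul_snd, Pi.smul_apply, Complex.smul_re,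
    Complex.smul_im, smul_eq_mul]
  have pull2 : ∀ (F : Fin N → Fin N → ℝ),
      (∑ j, ∑ m, c * F j m) = c * ∑ j, ∑ m, F j m := by
    intro F; rw [Finset.mul_sum]
    exact Finset.sum_congr rfl fun j _ => (Finset.mul_sum _ _ _).symm
  have pull1 : ∀ (F : Fin N → ℝ), (∑ j, c * F j) = c * ∑ j, F j := by
    intro F; rw [Finset.mul_sum]
  rw [show (∑ j, ∑ m, D₂ j m * (c * (x.1 m).re * (z.1 j).re + c * (x.1 m).im * (z.1 j).im))
      = ∑ j, ∑ m, c * (D₂ j m * ((x.1 m).re * (z.1 j).re + (x.1 m).im * (z.1 j).im)) from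
      Finset.sum_congr rfl fun j _ => Finset.sum_congr rfl fun m _ => by ring,
    pull2]
  rw [show (∑ j, (c * x.2.2.1 j * z.2.2.2 j + z.2.2.1 j * (c * x.2.2.2 j)))
      = ∑ j, c * (x.2.2.1 j * z.2.2.2 j + z.2.2.1 j * x.2.2.2 j) from
      Finset.sum_congr rfl fun j _ => by ring, pull1]
  rw [show (∑ j, (c * x.2.1 j * z.2.2.2 j + z.2.1 j * (c * x.2.2.2 j)))
      = ∑ j, c * (x.2.1 j * z.2.2.2 j + z.2.1 j * x.2.2.2 j) from
      Finset.sum_congr rfl fun j _ => by ring, pull1]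
  rw [show (∑ j, c * x.2.2.2 j * z.2.2.2 j) = ∑ j, c * (x.2.2.2 j * z.2.2.2 j) from
      Finset.sum_congr rfl fun j _ => by ring, pull1]
  rw [show (∑ j, c * x.2.1 j * z.2.1 j) = ∑ j, c * (x.2.1 j * z.2.1 j) from
      Finset.sum_congr rfl fun j _ => by ring, pull1]
  rw [show (∑ j, c * x.2.2.1 j * z.2.2.1 j) = ∑ j, c * (x.2.2.1 j * z.2.2.1 j) from
      Finset.sum_congr rfl fun j _ => by ring, pull1]
  rw [show (∑ j, (c * x.2.2.1 j * z.2.1 j + z.2.2.1 j * (c * x.2.1 j)))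
      = ∑ j, c * (x.2.2.1 j * z.2.1 j + z.2.2.1 j * x.2.1 j) from
      Finset.sum_congr rfl fun j _ => by ring, pull1]
  ring

lemma mulVec_re_sum {N : ℕ} (D : Matrix (Fin N) (Fin N) ℝ) (B : Fin N → ℂ) (w : ℂ)
    (j : Fin N) :
    (((D.map (Complex.ofReal)).mulVec B) j * (starRingEnd ℂ) w).re
      = ∑ m, D j m * ((B m).re * w.re + (B m).im * w.im) := by
  simp only [Matrix.mulVec, dotProduct, Matrix.map_apply, Finset.sum_mul,
    Complex.re_sum]
  refine Finset.sum_congr rfl fun m _ => ?_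
  simp [Complex.mul_re, Complex.mul_im, Complex.conj_re, Complex.conj_im]
  ring

lemma skew_pair {N : ℕ} (D : Matrix (Fin N) (Fin N) ℝ) (hD : Dᵀ = -D) (f g : Fin N → ℝ) :
    (∑ j, (D.mulVec f) j * g j) + (∑ j, (D.mulVec g) j * f j) = 0 := by
  have hD' : ∀ j m, D m j = -D j m := by
    intro j m
    have := congrFun (congrFun hD j) m
    simpa [Matrix.transpose_apply, Matrix.neg_apply] using this
  simp only [Matrix.mulVec, dotProduct, Finset.sum_mul]
  rw [show (∑ j, ∑ m, D j m * g m * f j) = ∑ j, ∑ m, D m j * g j * f m from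
    Finset.sum_comm, ← Finset.sum_add_distrib]
  refine Finset.sum_eq_zero fun j _ => ?_
  rw [← Finset.sum_add_distrib]
  refine Finset.sum_eq_zero fun m _ => ?_
  rw [hD' j m]; ring

lemma point_B (ω κ c : ℝ) (z w : ℂ) :
    ω * (z * (starRingEnd ℂ) (Complex.I * ((ω:ℂ) * z - (κ:ℂ) * (c:ℂ) * w))).re
      = κ / 2 * (c * (2 * ((starRingEnd ℂ) w
          * (Complex.I * ((ω:ℂ) * z - (κ:ℂ) * (c:ℂ) * w))).re)) := by
  simp only [_root_.map_mul, _root_.map_sub, Complex.conj_I, Complex.conj_ofReal,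
    Complex.mul_re, Complex.mul_im, Complex.sub_re, Complex.sub_im, Complex.I_re,
    Complex.I_im, Complex.ofReal_re, Complex.ofReal_im, Complex.neg_re, Complex.neg_im,
    Complex.conj_re, Complex.conj_im]
  ring

/-- One step of the full FPRK-s scheme with symplectic Runge–Kutta
coefficients, `D₁` real skew-symmetric and `D₂` real symmetric conserves the discrete
quadratic energy: `E_h^{n+1} = E_hⁿ`. -/
theorem FPRK_discrete_energy_conservation
    (s N : ℕ) (hs : 0 < s) (hN : 0 < N)
    (τ h ω κ ν β q : ℝ) (hτ : 0 < τ) (hh : 0 < h)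
    (D₁ D₂ : Matrix (Fin N) (Fin N) ℝ)
    (hD₁ : D₁ᵀ = -D₁) (hD₂ : D₂.IsSymm)
    (a : Fin s → Fin s → ℝ) (b : Fin s → ℝ)
    (hsymp : ∀ i j, b i * a i j + b j * a j i = b i * b j)
    (Bn B1 : Fin N → ℂ) (ρn un φn ρ1 u1 φ1 : Fin N → ℝ)
    (Bni : Fin s → Fin N → ℂ) (ρni uni φni : Fin s → Fin N → ℝ)
    (k1 : Fin s → Fin N → ℂ) (k2 k3 k4 : Fin s → Fin N → ℝ)
    (hBni : ∀ i j, Bni i j = Bn j + (τ : ℂ) * ∑ m, ((a i m : ℝ) : ℂ) * k1 m j)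
    (hρni : ∀ i j, ρni i j = ρn j + τ * ∑ m, a i m * k2 m j)
    (huni : ∀ i j, uni i j = un j + τ * ∑ m, a i m * k3 m j)
    (hφni : ∀ i j, φni i j = φn j + τ * ∑ m, a i m * k4 m j)
    (hk1 : ∀ i j, k1 i j = Complex.I *
      ((ω : ℂ) * ((D₂.map (Complex.ofReal)).mulVec (Bni i)) j
        - (κ : ℂ) * ((uni i j - ν / 2 * ρni i j + q * φni i j : ℝ) : ℂ) * Bni i j))
    (hk2 : ∀ i, k2 i = D₁.mulVec (fun m => -uni i m + ν * ρni i m - κ * φni i m))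
    (hk3 : ∀ i, k3 i = D₁.mulVec (fun m => -β * ρni i m + ν * uni i m + κ * ν / 2 * φni i m))
    (hk4 : ∀ i j, k4 i j = 2 * ((starRingEnd ℂ) (Bni i j) * k1 i j).re)
    (hB1 : ∀ j, B1 j = Bn j + (τ : ℂ) * ∑ i, ((b i : ℝ) : ℂ) * k1 i j)
    (hρ1 : ∀ j, ρ1 j = ρn j + τ * ∑ i, b i * k2 i j)
    (hu1 : ∀ j, u1 j = un j + τ * ∑ i, b i * k3 i j)
    (hφ1 : ∀ j, φ1 j = φn j + τ * ∑ i, b i * k4 i j) :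
    discreteEnergy h ω κ ν β q D₂ B1 ρ1 u1 φ1
      = discreteEnergy h ω κ ν β q D₂ Bn ρn un φn := by
  classical
  set yn : Vst N := (Bn, ρn, un, φn) with hyn
  set y1 : Vst N := (B1, ρ1, u1, φ1) with hy1def
  set Y : Fin s → Vst N := fun i => (Bni i, ρni i, uni i, φni i) with hYdef
  set kk : Fin s → Vst N := fun i => (k1 i, k2 i, k3 i, k4 i) with hkkdef
  -- energy equals h * Qf on the diagonal
  have energy_eq : ∀ (B : Fin N → ℂ) (ρ u φ : Fin N → ℝ),
      discreteEnergy h ω κ ν β q D₂ B ρ u φ = h * Qf ω κ ν β q D₂ (B, ρ, u, φ) (B, ρ, u, φ) := by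
    intro B ρ u φ
    unfold discreteEnergy Qf
    have hB : ∑ j, (((D₂.map (Complex.ofReal)).mulVec B) j * (starRingEnd ℂ) (B j)).re
        = ∑ j, ∑ m, D₂ j m * ((B m).re * (B j).re + (B m).im * (B j).im) :=
      Finset.sum_congr rfl fun j _ => mulVec_re_sum D₂ B (B j) j
    rw [hB]
    have h2 : ∑ j, (u j - ν / 2 * ρ j + q / 2 * φ j) * φ j
        = (1 / 2) * ∑ j, (u j * φ j + u j * φ j)
          - (ν / 4) * ∑ j, (ρ j * φ j + ρ j * φ j)
          + (q / 2) * ∑ j, φ j * φ j := by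
      rw [Finset.mul_sum, Finset.mul_sum, Finset.mul_sum, ← Finset.sum_sub_distrib,
        ← Finset.sum_add_distrib]
      exact Finset.sum_congr rfl fun j _ => by ring
    rw [h2]
    have h7 : ∑ j, u j * ρ j = (1 / 2) * ∑ j, (u j * ρ j + u j * ρ j) := by
      rw [Finset.mul_sum]; exact Finset.sum_congr rfl fun j _ => by ring
    rw [h7]
    ring
  -- stage condition
  have hstage : ∀ i, Qf ω κ ν β q D₂ (Y i) (kk i) = 0 := by
    intro i
    show Qf ω κ ν β q D₂ (Bni i, ρni i, uni i, φni i) (k1 i, k2 i, k3 i, k4 i) = 0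
    unfold Qf
    dsimp only
    have hBterm : ω * ∑ j, ∑ m,
        D₂ j m * ((Bni i m).re * (k1 i j).re + (Bni i m).im * (k1 i j).im)
        = ∑ j, κ / 2 * ((uni i j - ν / 2 * ρni i j + q * φni i j) * k4 i j) := by
      rw [Finset.mul_sum]
      refine Finset.sum_congr rfl fun j _ => ?_
      rw [← mulVec_re_sum, hk4 i j, hk1 i j]
      exact point_B ω κ (uni i j - ν / 2 * ρni i j + q * φni i j)
        (((D₂.map (Complex.ofReal)).mulVec (Bni i)) j) (Bni i j)
    rw [hBterm, hk2 i, hk3 i]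
    have key := skew_pair D₁ hD₁ (fun m => -uni i m + ν * ρni i m - κ * φni i m)
      (fun m => -β * ρni i m + ν * uni i m + κ * ν / 2 * φni i m)
    trans (∑ j, (1 / 2 : ℝ) *
      ((D₁.mulVec (fun m => -uni i m + ν * ρni i m - κ * φni i m)) j
          * (-β * ρni i j + ν * uni i j + κ * ν / 2 * φni i j)
        + (D₁.mulVec (fun m => -β * ρni i m + ν * uni i m + κ * ν / 2 * φni i m)) j
          * (-uni i j + ν * ρni i j - κ * φni i j)))
    · simp only [Finset.mul_sum, ← Finset.sum_sub_distrib, ← Finset.sum_add_distrib]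
      exact Finset.sum_congr rfl fun j _ => by ring
    · rw [← Finset.mul_sum, Finset.sum_add_distrib, key]
      ring
  -- translate the scheme into vector form
  have hYv : ∀ i, Y i = yn + τ • ∑ m, a i m • kk m := by
    intro i
    have c1 : (yn + τ • ∑ m, a i m • kk m).1 = Bni i := by
      funext j
      simp only [Prod.fst_add, Prod.smul_fst, Prod.fst_sum, Pi.add_apply, Pi.smul_apply,
        Finset.sum_apply, hyn, hkkdef]
      rw [hBni i j]
      simp [Complex.real_smul, Complex.ofReal_sum]
    have c2 : (yn + τ • ∑ m, a i m • kk m).2.1 = ρni i := by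
      funext j
      simp only [Prod.snd_add, Prod.smul_snd, Prod.snd_sum, Prod.fst_add, Prod.smul_fst,
        Prod.fst_sum, Pi.add_apply, Pi.smul_apply, Finset.sum_apply, hyn, hkkdef]
      rw [hρni i j]
      simp [smul_eq_mul, Finset.mul_sum]
    have c3 : (yn + τ • ∑ m, a i m • kk m).2.2.1 = uni i := by
      funext j
      simp only [Prod.snd_add, Prod.smul_snd, Prod.snd_sum, Prod.fst_add, Prod.smul_fst,
        Prod.fst_sum, Pi.add_apply, Pi.smul_apply, Finset.sum_apply, hyn, hkkdef]
      rw [huni i j]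
      simp [smul_eq_mul, Finset.mul_sum]
    have c4 : (yn + τ • ∑ m, a i m • kk m).2.2.2 = φni i := by
      funext j
      simp only [Prod.snd_add, Prod.smul_snd, Prod.snd_sum, Prod.fst_add, Prod.smul_fst,
        Prod.fst_sum, Pi.add_apply, Pi.smul_apply, Finset.sum_apply, hyn, hkkdef]
      rw [hφni i j]
      simp [smul_eq_mul, Finset.mul_sum]
    have : Y i = ((yn + τ • ∑ m, a i m • kk m).1, (yn + τ • ∑ m, a i m • kk m).2.1,
        (yn + τ • ∑ m, a i m • kk m).2.2.1, (yn + τ • ∑ m, a i m • kk m).2.2.2) := by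
      rw [c1, c2, c3, c4]
    rw [this]
  have hy1v : y1 = yn + τ • ∑ i, b i • kk i := by
    have c1 : (yn + τ • ∑ i, b i • kk i).1 = B1 := by
      funext j
      simp only [Prod.fst_add, Prod.smul_fst, Prod.fst_sum, Pi.add_apply, Pi.smul_apply,
        Finset.sum_apply, hyn, hkkdef]
      rw [hB1 j]
      simp [Complex.real_smul, Complex.ofReal_sum]
    have c2 : (yn + τ • ∑ i, b i • kk i).2.1 = ρ1 := by
      funext j
      simp only [Prod.snd_add, Prod.smul_snd, Prod.snd_sum, Prod.fst_add, Prod.smul_fst,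
        Prod.fst_sum, Pi.add_apply, Pi.smul_apply, Finset.sum_apply, hyn, hkkdef]
      rw [hρ1 j]
      simp [smul_eq_mul, Finset.mul_sum]
    have c3 : (yn + τ • ∑ i, b i • kk i).2.2.1 = u1 := by
      funext j
      simp only [Prod.snd_add, Prod.smul_snd, Prod.snd_sum, Prod.fst_add, Prod.smul_fst,
        Prod.fst_sum, Pi.add_apply, Pi.smul_apply, Finset.sum_apply, hyn, hkkdef]
      rw [hu1 j]
      simp [smul_eq_mul, Finset.mul_sum]
    have c4 : (yn + τ • ∑ i, b i • kk i).2.2.2 = φ1 := by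
      funext j
      simp only [Prod.snd_add, Prod.smul_snd, Prod.snd_sum, Prod.fst_add, Prod.smul_fst,
        Prod.fst_sum, Pi.add_apply, Pi.smul_apply, Finset.sum_apply, hyn, hkkdef]
      rw [hφ1 j]
      simp [smul_eq_mul, Finset.mul_sum]
    have : y1 = ((yn + τ • ∑ i, b i • kk i).1, (yn + τ • ∑ i, b i • kk i).2.1,
        (yn + τ • ∑ i, b i • kk i).2.2.1, (yn + τ • ∑ i, b i • kk i).2.2.2) := by
      rw [c1, c2, c3, c4]
    rw [this]
  have main := quad_conserve (Qf ω κ ν β q D₂)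
    (Qf_symm ω κ ν β q D₂ hD₂) (Qf_addl ω κ ν β q D₂) (Qf_smull ω κ ν β q D₂)
    a b hsymp τ yn y1 Y kk hYv hy1v hstage
  rw [energy_eq B1 ρ1 u1 φ1, energy_eq Bn ρn un φn]
  rw [show ((B1, ρ1, u1, φ1) : Vst N) = y1 from rfl,
    show ((Bn, ρn, un, φn) : Vst N) = yn from rfl, main]
end
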